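/- arXiv:2310.12441 — 5 statements merged into one kernel-verified Lean document; each statement's English description precedes it below -/
import Mathlib

section
/- Let N ≥ 1 and R = ℤ[x]/(x^N+1). Let f' : ℤ_{2N} → ℤ be nega-cyclic, i.e., f'(k + N) = −f'(k) for all k ∈ ℤ_{2N}. Define the test polynomial T = Σ_{i=0}^{N−1} f'(−i) x^i ∈ R (equivalently Σ_i f'(i) x^{−i}). Then for every u ∈ ℤ_{2N}, the constant coefficient of T · x^u in R equals f'(u). -/
/-!
Every coefficient of `T · x^u` in `ℤ[x]/(x^N+1)` is a value of `f'`: the coefficient of `x^j`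
(`j < N`) is `f'(u - j)`. For `u = 0` this is the definition of `T`. Multiplying by `x` shifts
the coefficients up by one and moves the top one, negated, to the constant term because
`x^N = -1`; nega-cyclicity `f'(u + 1) = -f'(u + 1 - N)` is exactly what keeps the invariant.
-/

open Polynomial

namespace Polynomial

variable {R : Type*} [CommRing R] {N : ℕ}

theorem mul_modByMonic_left {q : R[X]} (hq : q.Monic) (p r : R[X]) :
    (p * r) %ₘ q = (p %ₘ q * r) %ₘ q :=
  modByMonic_eq_of_dvd_sub hq ⟨p /ₘ q * r, by rw [modByMonic_eq_sub_mul_div p q]; ring⟩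

theorem monic_X_pow_add_one (hN : N ≠ 0) : (X ^ N + 1 : R[X]).Monic := by
  simpa using monic_X_pow_add_C (1 : R) hN

theorem degree_X_pow_add_one [Nontrivial R] (hN : N ≠ 0) : (X ^ N + 1 : R[X]).degree = N := by
  simpa using degree_X_pow_add_C (Nat.pos_of_ne_zero hN) (1 : R)

theorem mul_X_modByMonic_X_pow_add_one (hN : N ≠ 0) {q : R[X]} (hq : q.degree < N) :
    (q * X) %ₘ (X ^ N + 1) = q * X - C (q.coeff (N - 1)) * (X ^ N + 1) := by
  nontriviality R
  rw [modByMonic_eq_of_dvd_sub (p₂ := q * X - C (q.coeff (N - 1)) * (X ^ N + 1))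
    (monic_X_pow_add_one hN) ⟨C (q.coeff (N - 1)), by ring⟩,
    modByMonic_eq_self_iff (monic_X_pow_add_one hN), degree_X_pow_add_one hN,
    degree_lt_iff_coeff_zero]
  rw [degree_lt_iff_coeff_zero] at hq
  intro m hm
  obtain ⟨k, rfl⟩ : ∃ k, m = k + 1 := ⟨m - 1, by omega⟩
  rcases eq_or_ne (k + 1) N with hk | hk
  · subst hk
    simp [coeff_X_pow, coeff_one]
  · simp [coeff_X_pow, hk, coeff_one, hq k (by omega)]

theorem coeff_zero_mul_X_modByMonic_X_pow_add_one (hN : N ≠ 0) {q : R[X]} (hq : q.degree < N) :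
    ((q * X) %ₘ (X ^ N + 1)).coeff 0 = -q.coeff (N - 1) := by
  simp [mul_X_modByMonic_X_pow_add_one hN hq, coeff_X_pow, hN.symm]

theorem coeff_succ_mul_X_modByMonic_X_pow_add_one (hN : N ≠ 0) {q : R[X]} (hq : q.degree < N)
    {j : ℕ} (hj : j + 1 < N) :
    ((q * X) %ₘ (X ^ N + 1)).coeff (j + 1) = q.coeff j := by
  simp [mul_X_modByMonic_X_pow_add_one hN hq, coeff_X_pow, hj.ne, coeff_one]

end Polynomial

section TestPolynomial

variable {R : Type*} [CommRing R] {N : ℕ}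

noncomputable def testPoly (f : ZMod (2 * N) → R) : R[X] :=
  ∑ i ∈ Finset.range N, C (f (-(i : ZMod (2 * N)))) * X ^ i

theorem coeff_testPoly (f : ZMod (2 * N) → R) (j : ℕ) :
    (testPoly f).coeff j = if j < N then f (-(j : ZMod (2 * N))) else 0 := by
  simp [testPoly]

theorem degree_testPoly_lt (f : ZMod (2 * N) → R) : (testPoly f).degree < N :=
  (degree_lt_iff_coeff_zero _ _).2 fun m hm ↦ by simp [coeff_testPoly, hm.not_gt]

theorem coeff_testPoly_mul_X_pow_modByMonic (hN : N ≠ 0) {f : ZMod (2 * N) → R}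
    (hf : ∀ k, f (k + N) = -f k) (u : ℕ) {j : ℕ} (hj : j < N) :
    ((testPoly f * X ^ u) %ₘ (X ^ N + 1)).coeff j = f (u - j) := by
  nontriviality R
  induction u generalizing j with
  | zero =>
    rw [pow_zero, mul_one, (modByMonic_eq_self_iff (monic_X_pow_add_one hN)).2, coeff_testPoly,
      if_pos hj]
    · simp
    · rw [degree_X_pow_add_one hN]
      exact degree_testPoly_lt f
  | succ u ih =>
    have hq : ((testPoly f * X ^ u) %ₘ (X ^ N + 1)).degree < N := by
      simpa [degree_X_pow_add_one hN] using
        degree_modByMonic_lt (testPoly f * X ^ u) (monic_X_pow_add_one (R := R) hN)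
    rw [pow_succ, ← mul_assoc, mul_modByMonic_left (monic_X_pow_add_one hN)]
    cases j with
    | zero =>
      rw [coeff_zero_mul_X_modByMonic_X_pow_add_one hN hq, ih (by omega), ← hf]
      congr 1
      push_cast [Nat.cast_pred (Nat.pos_of_ne_zero hN)]
      ring
    | succ j =>
      rw [coeff_succ_mul_X_modByMonic_X_pow_add_one hN hq hj, ih (by omega)]
      congr 1
      push_cast
      ring

end TestPolynomial

/-- Test-coefficient look-up property of FHEW/TFHE: for a nega-cyclic
`f' : ℤ_{2N} → ℤ` and the test polynomial `T = Σ_{i<N} f'(−i) x^i`, the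
constant coefficient of `T · x^u` in `ℤ[x]/(x^N+1)` (i.e. the coefficient of
`x^0` of the representative of degree `< N`, computed via reduction modulo the
monic polynomial `X^N + 1`) equals `f'(u)`. -/
theorem stmt_4 (N : ℕ) (hN : 1 ≤ N) (f' : ZMod (2 * N) → ℤ)
    (hf : ∀ k : ZMod (2 * N), f' (k + (N : ZMod (2 * N))) = - f' k) :
    ∀ u : ℕ,
      (((∑ i ∈ Finset.range N, C (f' (-(i : ZMod (2 * N)))) * X ^ i) * X ^ u) %ₘ
          (X ^ N + 1)).coeff 0 = f' (u : ZMod (2 * N)) := by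
  intro u
  simpa only [testPoly, Nat.cast_zero, sub_zero] using
    coeff_testPoly_mul_X_pow_modByMonic (Nat.one_le_iff_ne_zero.mp hN) hf u hN
end

section
/- Let A be the r×r matrix over F = ℚ[x]/(x^N+1) with A(i,j) = x^{u_i} δ_{i−1 mod r, j}. Then the multiplicative order of A (in GL_r(F)) equals r times the multiplicative order of x^{u_0 + ⋯ + u_{r−1}} in F. -/
open Polynomial

/-- The base ring `F = ℚ[x]/(x^N + 1)`. -/
noncomputable abbrev Fq (N : ℕ) : Type :=
  Polynomial ℚ ⧸ Ideal.span ({X ^ N + 1} : Set (Polynomial ℚ))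

/-- The class of `x` in `F`. -/
noncomputable def xq (N : ℕ) : Fq N :=
  Ideal.Quotient.mk (Ideal.span ({X ^ N + 1} : Set (Polynomial ℚ))) X

/-!
`A` is a weighted cyclic shift: `A ^ m` sends index `i` to `i - m`, weighted by the product of
the `m` weights met on the way. Hence `A ^ m` has zero diagonal unless `r ∣ m`, while
`A ^ (r * k)` is the scalar matrix `c ^ k`, where `c = x ^ (u₀ + ⋯ + u_{r-1})` is the product
of all the weights. So `A ^ m = 1` iff `r ∣ m` and `c ^ (m / r) = 1`, which gives
`orderOf A = r * orderOf c`.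
-/

open Fin.NatCast

theorem Fin.prod_range_mul_sub_natCast {M : Type*} [CommMonoid M] {r : ℕ} [NeZero r]
    (a : Fin r → M) (k : ℕ) (i : Fin r) :
    ∏ t ∈ Finset.range (r * k), a (i - t) = (∏ j, a j) ^ k := by
  induction k with
  | zero => simp
  | succ k ih =>
    have hperiod : ∀ t : ℕ, ((r * k + t : ℕ) : Fin r) = t := by simp
    rw [Nat.mul_succ, Finset.prod_range_add, ih, pow_succ]
    congr 1
    simp only [hperiod]
    rw [← Fin.prod_univ_eq_prod_range (fun t => a (i - t))]
    simp only [Fin.cast_val_eq_self]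
    exact Fintype.prod_equiv (Equiv.subLeft i) _ _ fun _ => rfl

namespace Matrix

variable {R : Type*} [CommSemiring R] {r : ℕ} [NeZero r]

def weightedShift (a : Fin r → R) : Matrix (Fin r) (Fin r) R :=
  of fun i j => if j = i - 1 then a i else 0

theorem weightedShift_pow_apply (a : Fin r → R) (m : ℕ) (i j : Fin r) :
    (weightedShift a ^ m) i j =
      if j = i - m then ∏ t ∈ Finset.range m, a (i - t) else 0 := by
  induction m generalizing i with
  | zero => simp [one_apply, eq_comm]
  | succ m ih =>
    have hshift : i - 1 - (m : Fin r) = i - ((m + 1 : ℕ) : Fin r) := by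
      push_cast; open Fin.CommRing in ring
    have hprod : a i * ∏ t ∈ Finset.range m, a (i - 1 - t) =
        ∏ t ∈ Finset.range (m + 1), a (i - t) := by
      rw [Finset.prod_range_succ', mul_comm]
      congr 1
      · refine Finset.prod_congr rfl fun t _ => congrArg a ?_
        push_cast; open Fin.CommRing in ring
      · simp
    rw [pow_succ', mul_apply, Finset.sum_eq_single (i - 1)]
    · rw [ih]
      simp only [weightedShift, of_apply, if_true, mul_ite, mul_zero, hshift, hprod]
    · intro k _ hk
      simp [weightedShift, hk]
    · simp

theorem weightedShift_pow_eq_one_iff [Nontrivial R] (a : Fin r → R) (m : ℕ) :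
    weightedShift a ^ m = 1 ↔ r ∣ m ∧ (∏ j, a j) ^ (m / r) = 1 := by
  constructor
  · intro h
    have hdiag := congrFun (congrFun h 0) 0
    rw [weightedShift_pow_apply, one_apply_eq] at hdiag
    split_ifs at hdiag with hm
    · obtain ⟨k, rfl⟩ : r ∣ m := by simpa [eq_comm] using hm
      rw [Fin.prod_range_mul_sub_natCast] at hdiag
      rw [Nat.mul_div_cancel_left k (Nat.pos_of_neZero r)]
      exact ⟨dvd_mul_right r k, hdiag⟩
    · exact absurd hdiag zero_ne_one
  · rintro ⟨⟨k, rfl⟩, hpow⟩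
    rw [Nat.mul_div_cancel_left k (Nat.pos_of_neZero r)] at hpow
    ext i j
    have hm : ((r * k : ℕ) : Fin r) = 0 := Fin.natCast_eq_zero.mpr (dvd_mul_right r k)
    rw [weightedShift_pow_apply, hm, sub_zero, Fin.prod_range_mul_sub_natCast, hpow, one_apply]
    exact if_congr eq_comm rfl rfl

theorem orderOf_weightedShift [Nontrivial R] (a : Fin r → R) :
    orderOf (weightedShift a) = r * orderOf (∏ j, a j) := by
  refine Nat.dvd_right_iff_eq.mp fun m => ?_
  rw [orderOf_dvd_iff_pow_eq_one, weightedShift_pow_eq_one_iff]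
  constructor
  · rintro ⟨hrm, hpow⟩
    exact (Nat.dvd_div_iff_mul_dvd hrm).mp (orderOf_dvd_of_pow_eq_one hpow)
  · intro h
    have hrm : r ∣ m := dvd_trans (dvd_mul_right _ _) h
    exact ⟨hrm, orderOf_dvd_iff_pow_eq_one.mp ((Nat.dvd_div_iff_mul_dvd hrm).mpr h)⟩

end Matrix

theorem nontrivial_Fq {N : ℕ} (hN : 0 < N) : Nontrivial (Fq N) := by
  refine Ideal.Quotient.nontrivial_iff.mpr fun htop => ?_
  refine not_isUnit_of_natDegree_pos (X ^ N + 1 : ℚ[X]) ?_ (Ideal.span_singleton_eq_top.mp htop)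
  rwa [← C_1, natDegree_X_pow_add_C]

/-- Lemma 4 (equation 24): for `A(i,j) = x^{u_i} δ_{i−1 mod r, j}`, the
multiplicative order of `A` equals `r` times the order of `x^{u_0+⋯+u_{r−1}}`. -/
theorem stmt_8 (N r : ℕ) (hN : 0 < N) [NeZero r] (u : Fin r → ℕ)
    (A : Matrix (Fin r) (Fin r) (Fq N))
    (hA : ∀ i j, A i j = if j = i - 1 then xq N ^ u i else 0) :
    orderOf A = r * orderOf (xq N ^ (∑ i, u i)) := by
  have := nontrivial_Fq hN
  obtain rfl : A = Matrix.weightedShift (fun i => xq N ^ u i) := Matrix.ext hA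
  rw [Matrix.orderOf_weightedShift, Finset.prod_pow_eq_pow_sum]
end

section
/- Let Φ(1) be the r×r matrix over F = ℚ[x]/(x^N+1) of the form Φ(1)(i,j) = x^{u_i} δ_{i−1 mod r, j} with u_i ∈ ℤ_{2N}, and suppose x^{u_0 + ⋯ + u_{r−1}} has order 2N in F. Then the cyclic group generated by Φ(1) acts transitively on MMIV_r = { x^i e_j : i ∈ [2N], j ∈ [r] }. -/
open Polynomial
open scoped Matrix
open Fin.NatCast Fin.CommRing

/-- The set of monic monomial indicator vectors `MMIV_r = {x^i e_j}`. -/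
def MMIV (N r : ℕ) : Set (Fin r → Fq N) :=
  {v | ∃ i : ℕ, i < 2 * N ∧ ∃ j : Fin r, v = Pi.single j (xq N ^ i)}

lemma xq_pow_two_mul (N : ℕ) : xq N ^ (2 * N) = 1 := by
  have hN : xq N ^ N = -1 := by
    unfold xq
    rw [← map_pow]
    have : (Ideal.Quotient.mk (Ideal.span ({X ^ N + 1} : Set (Polynomial ℚ)))) (X ^ N)
        = Ideal.Quotient.mk _ (-1) := by
      rw [Ideal.Quotient.eq]
      have : (X : Polynomial ℚ) ^ N - (-1) = X ^ N + 1 := by ring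
      rw [this]
      exact Ideal.subset_span (Set.mem_singleton _)
    rw [this, map_neg, map_one]
  rw [mul_comm, pow_mul, hN]
  ring

/-- Theorem 1 ('if' direction, canonical form): if
`Φ(1)(i,j) = x^{u_i} δ_{i−1 mod r, j}` and `x^{u_0+⋯+u_{r−1}}` has order `2N`,
then the cyclic group generated by `Φ(1)` acts transitively on `MMIV_r`. -/
theorem stmt_13 (N r : ℕ) (hN : 0 < N) [NeZero r] (u : Fin r → ℕ)
    (A : Matrix (Fin r) (Fin r) (Fq N))
    (hA : ∀ i j, A i j = if j = i - 1 then xq N ^ u i else 0)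
    (horder : orderOf (xq N ^ (∑ i, u i)) = 2 * N) :
    ∀ v ∈ MMIV N r, ∀ w ∈ MMIV N r, ∃ c : ℕ, (A ^ c) *ᵥ v = w := by
  intro v hv w hw
  obtain ⟨i, hi, j, rfl⟩ := hv
  obtain ⟨i', hi', j', rfl⟩ := hw
  set S := ∑ i, u i with hS
  -- single application of A
  have hstep : ∀ (j : Fin r) (z : Fq N),
      A *ᵥ Pi.single j z = Pi.single (j + 1) (xq N ^ u (j + 1) * z) := by
    intro j z
    rw [Matrix.mulVec_single]
    funext k
    change A k j * z = _
    rw [hA, Pi.single_apply]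
    by_cases h : k = j + 1
    · subst h
      simp [add_sub_cancel_right]
    · have h2 : ¬(j = k - 1) := by
        intro hk
        apply h
        rw [hk]
        abel
      simp [h, h2]
  -- iterated application
  have hiter : ∀ (c : ℕ) (j : Fin r) (z : Fq N),
      (A ^ c) *ᵥ Pi.single j z
        = Pi.single (j + (c : Fin r))
            (xq N ^ (∑ t ∈ Finset.range c, u (j + (t : Fin r) + 1)) * z) := by
    intro c
    induction c with
    | zero =>
      intro j z
      rw [pow_zero, Matrix.one_mulVec]
      simp
    | succ c ih =>
      intro j z
      rw [pow_succ', ← Matrix.mulVec_mulVec, ih, hstep]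
      have hc : ((c + 1 : ℕ) : Fin r) = (c : Fin r) + 1 := by push_cast; ring
      have hidx : j + ((c + 1 : ℕ) : Fin r) = j + (c : Fin r) + 1 := by
        rw [hc, add_assoc]
      rw [hidx, Finset.sum_range_succ, pow_add]
      rw [mul_assoc, mul_left_comm]
  -- sum over a full cycle
  have hcyc : ∀ a : Fin r, ∑ t ∈ Finset.range r, u (a + (t : Fin r) + 1) = S := by
    intro a
    rw [← Fin.sum_univ_eq_sum_range (fun t => u (a + (t : ℕ) + 1)) r]
    have he := Equiv.sum_comp (Equiv.addLeft (a + 1)) u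
    simp only [Equiv.coe_addLeft] at he
    rw [hS, ← he]
    apply Finset.sum_congr rfl
    intro t _
    congr 1
    rw [Fin.cast_val_eq_self]
    ring
  -- sum over several full cycles
  have hmul : ∀ (k : ℕ) (a : Fin r),
      ∑ t ∈ Finset.range (k * r), u (a + (t : Fin r) + 1) = k * S := by
    intro k a
    induction k with
    | zero => simp
    | succ k ih =>
      rw [Nat.succ_mul, Finset.sum_range_add, ih]
      have : ∑ t ∈ Finset.range r, u (a + ((k * r + t : ℕ) : Fin r) + 1) = S := by
        rw [← hcyc a]
        apply Finset.sum_congr rfl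
        intro t _
        congr 2
        push_cast [Fin.natCast_self]
        ring
      rw [this]
      ring
  -- order-theoretic facts
  have h2N : 0 < 2 * N := by omega
  have hx2N : xq N ^ (2 * N) = 1 := xq_pow_two_mul N
  have hSne : S ≠ 0 := by
    intro h
    rw [h, pow_zero, orderOf_one] at horder
    omega
  have hdvd : orderOf (xq N) ∣ 2 * N := orderOf_dvd_of_pow_eq_one hx2N
  have hpow := orderOf_pow' (xq N) hSne
  rw [horder] at hpow
  have hord_le : orderOf (xq N) ≤ 2 * N := Nat.le_of_dvd h2N hdvd
  have hord : orderOf (xq N) = 2 * N := by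
    have := Nat.div_le_self (orderOf (xq N)) (Nat.gcd (orderOf (xq N)) S)
    omega
  have hgcd : Nat.gcd (2 * N) S = 1 := by
    rw [hord] at hpow
    by_contra hg
    have hgpos : 0 < Nat.gcd (2 * N) S := Nat.gcd_pos_of_pos_left _ h2N
    have hg2 : 2 ≤ Nat.gcd (2 * N) S := by omega
    have := Nat.div_lt_self h2N (by omega : 1 < Nat.gcd (2 * N) S)
    omega
  -- reduce powers mod 2N
  have hkey : ∀ p : ℕ, xq N ^ p = xq N ^ (p % (2 * N)) := by
    intro p
    conv_lhs => rw [← Nat.mod_add_div p (2 * N)]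
    rw [pow_add, pow_mul, hx2N, one_pow, mul_one]
  have hpoweq : ∀ p q : ℕ, p ≡ q [MOD 2 * N] → xq N ^ p = xq N ^ q := by
    intro p q h
    rw [hkey p, hkey q, h]
  -- solve k * S + d ≡ e (mod 2N)
  haveI : NeZero (2 * N) := ⟨by omega⟩
  have hsolve : ∀ d e : ℕ, ∃ k : ℕ, (k * S + d) ≡ e [MOD 2 * N] := by
    intro d e
    have hu : IsUnit ((S : ZMod (2 * N))) := by
      rw [ZMod.isUnit_iff_coprime]
      exact Nat.coprime_comm.mp hgcd
    refine ⟨((((e : ZMod (2 * N)) - d) * (S : ZMod (2 * N))⁻¹)).val, ?_⟩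
    rw [← ZMod.natCast_eq_natCast_iff]
    push_cast
    rw [ZMod.natCast_val, ZMod.cast_id, mul_assoc, ZMod.inv_mul_of_unit _ hu]
    ring
  -- assemble
  set m := (j' - j).val with hm
  have hjm : j + (m : Fin r) = j' := by
    rw [hm, Fin.cast_val_eq_self]
    abel
  obtain ⟨k, hk⟩ := hsolve ((∑ t ∈ Finset.range m, u (j + (t : Fin r) + 1)) + i) i'
  refine ⟨k * r + m, ?_⟩
  rw [pow_add, ← Matrix.mulVec_mulVec, hiter m j _, hjm, hiter (k * r) j' _]
  have hz : ((k * r : ℕ) : Fin r) = 0 := by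
    push_cast [Fin.natCast_self]
    ring
  rw [hz, add_zero, hmul k j', ← pow_add, ← pow_add]
  exact congrArg _ (hpoweq _ _ hk)
end

section
/- Let Φ(1) be the r×r matrix over F = ℚ[x]/(x^N+1) of the canonical form Φ(1)(i,j) = x^{u_i} δ_{i−1 mod r, j} with x^{u_0+⋯+u_{r−1}} of order 2N, and write Φ(c) = Φ(1)^c. Then for any k ∈ ℤ, the Nr vectors { Φ(k+i) e_0 : i ∈ [Nr] } ⊆ F^r are linearly independent over ℚ. -/
open Polynomial
open scoped Matrix
open Fin.NatCast

/-!
`Φ(1)` maps `c e_m` to `x^{u_{m+1}} c e_{m+1}`, so `Φ(n) e_0 = x^{t_n} e_{n mod r}` with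
`t_n = u_1 + ⋯ + u_n` (indices mod `r`), and `t_{a + r c} = t_a + c S` where `S = ∑ u_i`.
Since `x^N = -1`, `x^t = ± x^{t mod N}`, so for `i = a + r c` (`a < r`, `c < N`) the vector
`Φ(i) e_0` is, up to sign, the element `x^{(t_a + c S) mod N} e_a` of the standard `ℚ`-basis
of `F^r`. The order hypothesis makes `S` coprime to `N`, so these basis elements are pairwise
distinct. Finally `Φ(k)` is invertible, so it preserves linear independence.
-/

section CyclicShift

variable {R : Type*} [CommSemiring R] {r : ℕ} [NeZero r]

def cyclicPartialSum (u : Fin r → ℕ) (n : ℕ) : ℕ :=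
  ∑ j ∈ Finset.range n, u (j + 1 : ℕ)

lemma cyclicPartialSum_succ (u : Fin r → ℕ) (n : ℕ) :
    cyclicPartialSum u (n + 1) = cyclicPartialSum u n + u (n + 1 : ℕ) :=
  Finset.sum_range_succ _ _

lemma cyclicPartialSum_add_period (u : Fin r → ℕ) (n : ℕ) :
    cyclicPartialSum u (n + r) = cyclicPartialSum u n + ∑ i, u i := by
  rw [cyclicPartialSum, Finset.sum_range_add, ← cyclicPartialSum,
    ← Fin.sum_univ_eq_sum_range (fun j => u (n + j + 1 : ℕ))]
  congr 1
  refine Fintype.sum_equiv (Equiv.addLeft ((n + 1 : ℕ) : Fin r)) _ _ fun j => ?_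
  rw [Equiv.coe_addLeft]
  congr 1
  push_cast
  exact add_right_comm _ _ _

lemma cyclicPartialSum_add_mul (u : Fin r → ℕ) (n c : ℕ) :
    cyclicPartialSum u (n + r * c) = cyclicPartialSum u n + c * ∑ i, u i := by
  induction c with
  | zero => simp
  | succ c ih => rw [mul_add_one, ← add_assoc, cyclicPartialSum_add_period, ih]; ring

variable {x : R} {u : Fin r → ℕ} {A : Matrix (Fin r) (Fin r) R}

lemma mulVec_single_of_cyclicShift (hA : ∀ i j, A i j = if j = i - 1 then x ^ u i else 0)
    (m : Fin r) (c : R) : A *ᵥ Pi.single m c = Pi.single (m + 1) (x ^ u (m + 1) * c) := by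
  ext i
  rw [Matrix.mulVec_single, Pi.smul_apply, op_smul_eq_mul, Matrix.col_apply, hA,
    Pi.single_apply]
  by_cases h : i = m + 1
  · simp [h]
  · rw [if_neg h, if_neg (fun hm => h (eq_add_of_sub_eq hm.symm)), zero_mul]

lemma pow_mulVec_single_zero_of_cyclicShift
    (hA : ∀ i j, A i j = if j = i - 1 then x ^ u i else 0) (n : ℕ) :
    (A ^ n) *ᵥ Pi.single 0 1 = Pi.single (n : Fin r) (x ^ cyclicPartialSum u n) := by
  induction n with
  | zero => rw [pow_zero, Matrix.one_mulVec]; simp [cyclicPartialSum]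
  | succ n ih =>
    rw [pow_succ', ← Matrix.mulVec_mulVec, ih, mulVec_single_of_cyclicShift hA,
      cyclicPartialSum_succ, pow_add, mul_comm]
    push_cast
    rfl

end CyclicShift

lemma Nat.Coprime.of_orderOf_pow_eq {G : Type*} [Monoid G] {x : G} {n m : ℕ} (hn : 0 < n)
    (hx : x ^ n = 1) (h : orderOf (x ^ m) = n) : n.Coprime m := by
  have hfin : IsOfFinOrder x := isOfFinOrder_iff_pow_eq_one.mpr ⟨n, hn, hx⟩
  have hord : orderOf x = n :=
    Nat.dvd_antisymm (orderOf_dvd_of_pow_eq_one hx) (h ▸ orderOf_pow_dvd m)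
  rw [hfin.orderOf_pow, hord, Nat.div_eq_self] at h
  exact h.resolve_left hn.ne'

lemma neg_one_pow_mul_eq_units_smul {R A : Type*} [CommRing R] [Ring A] [Algebra R A] (q : ℕ)
    (y : A) : (-1 : A) ^ q * y = ((-1 : Rˣ) ^ q) • y := by
  simp [Units.smul_def, Algebra.smul_def]

lemma xq_pow_self (N : ℕ) : xq N ^ N = -1 := by
  have h : (Ideal.Quotient.mk (Ideal.span ({X ^ N + 1} : Set ℚ[X])) (X ^ N + 1) : Fq N) = 0 :=
    Ideal.Quotient.eq_zero_iff_mem.mpr (Ideal.subset_span rfl)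
  rw [map_add, map_pow, map_one] at h
  exact eq_neg_of_add_eq_zero_left h

lemma xq_pow_eq_units_smul (N t : ℕ) :
    xq N ^ t = ((-1 : ℚˣ) ^ (t / N)) • xq N ^ (t % N) := by
  conv_lhs => rw [← Nat.div_add_mod t N]
  rw [pow_add, pow_mul, xq_pow_self, neg_one_pow_mul_eq_units_smul (R := ℚ)]

lemma linearIndependent_single_xq_pow {N : ℕ} (hN : 0 < N) (r : ℕ) :
    LinearIndependent ℚ fun p : (_ : Fin r) × Fin N =>
      (Pi.single p.1 (xq N ^ (p.2 : ℕ)) : Fin r → Fq N) := by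
  have hmonic : (X ^ N + 1 : ℚ[X]).Monic := by
    simpa using monic_X_pow_add_C (1 : ℚ) hN.ne'
  have hdim : (AdjoinRoot.powerBasis' hmonic).dim = N := by
    rw [AdjoinRoot.powerBasis'_dim, ← C_1, natDegree_X_pow_add_C]
  let B : Module.Basis (Fin N) ℚ (AdjoinRoot (X ^ N + 1 : ℚ[X])) :=
    (AdjoinRoot.powerBasis' hmonic).basis.reindex (finCongr hdim)
  have hB : ⇑(Pi.basis fun _ : Fin r => B) = fun p => Pi.single p.1 (xq N ^ (p.2 : ℕ)) := by
    ext1 p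
    rw [Pi.basis_apply, Module.Basis.reindex_apply, PowerBasis.basis_eq_pow]
    rfl
  exact hB ▸ (Pi.basis fun _ : Fin r => B).linearIndependent

lemma linearIndependent_pow_mulVec_single_zero {N r : ℕ} (hN : 0 < N) [NeZero r] {u : Fin r → ℕ}
    {A : Matrix (Fin r) (Fin r) (Fq N)}
    (hA : ∀ i j, A i j = if j = i - 1 then xq N ^ u i else 0)
    (horder : orderOf (xq N ^ (∑ i, u i)) = 2 * N) :
    LinearIndependent ℚ fun i : Fin (N * r) => (A ^ (i : ℕ)) *ᵥ Pi.single 0 1 := by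
  set S := ∑ i, u i
  have hcop : N.Coprime S := Nat.Coprime.coprime_mul_left <|
    .of_orderOf_pow_eq (by positivity) (by rw [pow_mul', xq_pow_self]; norm_num) horder
  let e (p : Fin N × Fin r) : ℕ := cyclicPartialSum u p.2 + p.1 * S
  let σ (p : Fin N × Fin r) : (_ : Fin r) × Fin N := ⟨p.2, ⟨e p % N, Nat.mod_lt _ hN⟩⟩
  have hσ : Function.Injective σ := by
    rintro ⟨c, a⟩ ⟨c', a'⟩ h
    simp only [σ, e, Sigma.mk.inj_iff, Fin.mk.injEq, heq_eq_eq] at h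
    obtain ⟨rfl, h⟩ := h
    have hc : (c : ℕ) ≡ c' [MOD N] :=
      (Nat.ModEq.add_left_cancel' _ h).cancel_right_of_coprime hcop
    rw [Fin.val_injective (hc.eq_of_lt_of_lt c.isLt c'.isLt)]
  rw [← linearIndependent_equiv' finProdFinEquiv rfl]
  convert ((linearIndependent_single_xq_pow hN r).comp σ hσ).units_smul
    fun p => (-1 : ℚˣ) ^ (e p / N) using 1
  funext ⟨c, a⟩
  have ha : ((a + r * c : ℕ) : Fin r) = a := by simp
  rw [Function.comp_apply, finProdFinEquiv_apply_val, pow_mulVec_single_zero_of_cyclicShift hA,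
    cyclicPartialSum_add_mul, ha, xq_pow_eq_units_smul N, Pi.single_smul]
  rfl

theorem stmt_15_general (N r : ℕ) [NeZero r] (u : Fin r → ℕ)
    (A : Matrix (Fin r) (Fin r) (Fq N))
    (hA : ∀ i j, A i j = if j = i - 1 then xq N ^ u i else 0)
    (horder : orderOf (xq N ^ (∑ i, u i)) = 2 * N)
    (hAu : IsUnit A) (k : ℤ) :
    LinearIndependent ℚ fun i : Fin (N * r) =>
      ((hAu.unit ^ (k + (i : ℤ))) : (Matrix (Fin r) (Fin r) (Fq N))ˣ).val *ᵥ
        (Pi.single 0 1 : Fin r → Fq N) := by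
  rcases N.eq_zero_or_pos with rfl | hN
  · have : IsEmpty (Fin (0 * r)) := by simp only [zero_mul]; infer_instance
    exact linearIndependent_empty_type
  let Φk := (hAu.unit ^ k : (Matrix (Fin r) (Fin r) (Fq N))ˣ).val
  have hinj : LinearMap.ker (Φk.mulVecLin.restrictScalars ℚ) = ⊥ :=
    LinearMap.ker_eq_bot_of_injective (Matrix.mulVec_injective_of_isUnit (Units.isUnit _))
  suffices hfun : (fun i : Fin (N * r) => (hAu.unit ^ (k + (i : ℤ))).val *ᵥ Pi.single 0 1) =
      Φk.mulVecLin.restrictScalars ℚ ∘ fun i : Fin (N * r) => (A ^ (i : ℕ)) *ᵥ Pi.single 0 1 by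
    rw [hfun]
    exact (linearIndependent_pow_mulVec_single_zero hN hA horder).map' _ hinj
  funext i
  rw [zpow_add, Units.val_mul, zpow_natCast, Units.val_pow_eq_pow_val, hAu.unit_spec]
  simp only [Function.comp_apply, LinearMap.coe_restrictScalars, Matrix.mulVecLin_apply,
    Matrix.mulVec_mulVec, Φk]

/-- Lemma 6: for the canonical generator `Φ(1)` (an invertible matrix) with
`x^{u_0+⋯+u_{r−1}}` of order `2N`, and any `k ∈ ℤ`, the `Nr` vectors
`Φ(k+i) e_0`, `i ∈ [Nr]`, are linearly independent over `ℚ`. -/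
theorem stmt_15 (N r : ℕ) (hN : 0 < N) [NeZero r] (u : Fin r → ℕ)
    (A : Matrix (Fin r) (Fin r) (Fq N))
    (hA : ∀ i j, A i j = if j = i - 1 then xq N ^ u i else 0)
    (horder : orderOf (xq N ^ (∑ i, u i)) = 2 * N)
    (hAu : IsUnit A) (k : ℤ) :
    LinearIndependent ℚ fun i : Fin (N * r) =>
      ((hAu.unit ^ (k + (i : ℤ))) : (Matrix (Fin r) (Fin r) (Fq N))ˣ).val *ᵥ
        (Pi.single 0 1 : Fin r → Fq N) :=
  stmt_15_general N r u A hA horder hAu k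
end

section
/- Let Φ(1) be the canonical r×r generator over F = ℚ[x]/(x^N+1) with x^{u_0+⋯+u_{r−1}} of order 2N, let v_0, …, v_{2Nr−1} ∈ ℚ satisfy v_{Nr+l} = −v_l for all l ∈ [Nr], and define v_0^{vec} = Σ_{i ∈ [Nr]} v_i Φ(−i) e_0 ∈ F^r. Then for every m ∈ ℤ_{2Nr}, the first coordinate of Φ(m) · v_0^{vec}, written as a polynomial of degree < N in x, has constant term equal to v_m. -/
open Polynomial
open scoped Matrix

/-! `Φ(1)` is a weighted cyclic shift, so `Φ(1)^r` is the scalar `y = x^S`, where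
`S = u_0 + ⋯ + u_{r-1}`. Hence `Φ` has period `2Nr`, and the `(0,0)` entry of `Φ(k)`,
`0 ≤ k < 2Nr`, vanishes unless `k = qr`, in which case it is `y^q`. As `x^N = -1` and `y` has
order `2N`, the constant term of `y^q` is `1` for `q = 0`, `-1` for `q = N` and `0` otherwise.
The first coordinate of `Φ(m) v₀` is `Σ_{i<Nr} v_i Φ(m-i)_{00}`, so its constant term is `v_m`
when `m mod 2Nr < Nr`, and `-v_{m-Nr} = v_m` otherwise. -/

open Finset

namespace Fq

variable {N : ℕ}

theorem monic_X_pow_add_one (hN : 0 < N) : (X ^ N + 1 : ℚ[X]).Monic := by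
  simpa using monic_X_pow_add_C (1 : ℚ) hN.ne'

noncomputable def constTerm (hN : 0 < N) : Fq N →ₗ[ℚ] ℚ :=
  (lcoeff ℚ 0).comp (AdjoinRoot.modByMonicHom (monic_X_pow_add_one hN))

theorem constTerm_mk_of_degree_lt (hN : 0 < N) {p : ℚ[X]} (hp : p.degree < N) :
    constTerm hN (Ideal.Quotient.mk _ p) = p.coeff 0 := by
  have hmod : p %ₘ (X ^ N + 1) = p := by
    rw [modByMonic_eq_self_iff (monic_X_pow_add_one hN)]
    simpa using degree_X_pow_add_C hN (1 : ℚ) ▸ hp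
  change (AdjoinRoot.modByMonicHom (monic_X_pow_add_one hN) (AdjoinRoot.mk _ p)).coeff 0 = _
  rw [AdjoinRoot.modByMonicHom_mk, hmod]

theorem xq_pow_self : xq N ^ N = -1 := by
  rw [eq_neg_iff_add_eq_zero, xq, ← map_pow, ← map_one (Ideal.Quotient.mk _), ← map_add,
    Ideal.Quotient.eq_zero_iff_mem]
  exact Ideal.subset_span rfl

theorem constTerm_xq_pow_of_lt (hN : 0 < N) {b : ℕ} (hb : b < N) :
    constTerm hN (xq N ^ b) = if b = 0 then 1 else 0 := by
  rw [xq, ← map_pow, constTerm_mk_of_degree_lt hN (by rw [degree_X_pow]; exact_mod_cast hb),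
    coeff_X_pow]
  simp [eq_comm]

theorem constTerm_one (hN : 0 < N) : constTerm hN 1 = 1 := by
  simpa using constTerm_xq_pow_of_lt hN hN

theorem constTerm_xq_pow_eq_zero (hN : 0 < N) {t : ℕ} (ht : ¬ N ∣ t) :
    constTerm hN (xq N ^ t) = 0 := by
  have hmod : t % N ≠ 0 := fun h => ht (Nat.dvd_of_mod_eq_zero h)
  rw [← Nat.div_add_mod t N, pow_add, pow_mul, xq_pow_self]
  rcases neg_one_pow_eq_or (Fq N) (t / N) with h | h <;>
    simp [h, constTerm_xq_pow_of_lt hN (Nat.mod_lt t hN), hmod]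


theorem constTerm_pow_of_orderOf (hN : 0 < N) {S : ℕ} (hS : orderOf (xq N ^ S) = 2 * N)
    {q : ℕ} (hq : q < 2 * N) :
    constTerm hN ((xq N ^ S) ^ q) = if q = 0 then 1 else if q = N then -1 else 0 := by
  rcases eq_or_ne q 0 with rfl | hq0
  · simp [constTerm_one]
  rcases eq_or_ne q N with hqN | hqN
  · subst q
    have hne : (xq N ^ S) ^ N ≠ 1 := pow_ne_one_of_lt_orderOf hq0 (by omega)
    rw [← pow_mul, mul_comm, pow_mul, xq_pow_self] at hne ⊢
    rcases neg_one_pow_eq_or (Fq N) S with h | h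
    · exact absurd h hne
    · simp [h, hq0, constTerm_one]
  rw [← pow_mul, constTerm_xq_pow_eq_zero hN, if_neg hq0, if_neg hqN]
  rintro ⟨a, ha⟩
  have hone : (xq N ^ S) ^ (2 * q) = 1 := by
    rw [← pow_mul, show S * (2 * q) = N * (2 * a) by rw [mul_left_comm, ha, mul_left_comm],
      pow_mul, xq_pow_self, pow_mul]
    norm_num
  have h2N : 2 * N ∣ 2 * q := hS ▸ orderOf_dvd_of_pow_eq_one hone
  obtain ⟨c, rfl⟩ := (Nat.mul_dvd_mul_iff_left two_pos).mp h2N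
  have hc : c < 2 := by nlinarith
  interval_cases c <;> simp_all

end Fq

section Shift

open Fin.NatCast Fin.CommRing

variable {R : Type*} [CommSemiring R] {r : ℕ} [NeZero r] {w : Fin r → R}
  {A : Matrix (Fin r) (Fin r) R}

theorem pow_apply_of_shift (hA : ∀ i j, A i j = if j = i - 1 then w i else 0) (k : ℕ)
    (i j : Fin r) :
    (A ^ k) i j = if j + k = i then ∏ t ∈ range k, w (i - t) else 0 := by
  induction k generalizing i j with
  | zero => simp [Matrix.one_apply, eq_comm]
  | succ k ih =>
    rw [pow_succ, Matrix.mul_apply, sum_eq_single (j + 1)]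
    · rw [hA, if_pos (by ring), ih, Nat.cast_succ, prod_range_succ]
      by_cases hc : j + (k + 1) = i
      · rw [if_pos (by rw [← hc]; ring), if_pos hc, show j + 1 = i - k by rw [← hc]; ring]
      · rw [if_neg (by contrapose! hc; rw [← hc]; ring), if_neg hc, zero_mul]
    · intro b _ hb
      rw [hA, if_neg (by contrapose! hb; rw [hb]; ring), mul_zero]
    · simp

theorem pow_self_of_shift (hA : ∀ i j, A i j = if j = i - 1 then w i else 0) :
    A ^ r = (∏ i, w i) • (1 : Matrix (Fin r) (Fin r) R) := by
  ext i j
  have hblock : ∏ t ∈ range r, w (i - t) = ∏ i, w i := by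
    rw [← Fin.prod_univ_eq_prod_range (fun t => w (i - t))]
    simpa using Equiv.prod_comp (Equiv.subLeft i) w
  rw [pow_apply_of_shift hA, Fin.natCast_self, add_zero, hblock, Matrix.smul_apply,
    Matrix.one_apply]
  by_cases h : j = i
  · simp [h]
  · simp [h, Ne.symm h]

theorem pow_apply_zero_zero_of_shift (hA : ∀ i j, A i j = if j = i - 1 then w i else 0)
    (k : ℕ) : (A ^ k) 0 0 = if r ∣ k then (∏ i, w i) ^ (k / r) else 0 := by
  split_ifs with hk
  · obtain ⟨q, rfl⟩ := hk
    rw [pow_mul, pow_self_of_shift hA, _root_.smul_pow, one_pow,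
      Nat.mul_div_cancel_left _ (NeZero.pos r)]
    simp
  · rw [pow_apply_of_shift hA, zero_add, if_neg (by rwa [Fin.natCast_eq_zero])]

theorem pow_mul_eq_one_of_shift (hA : ∀ i j, A i j = if j = i - 1 then w i else 0) {n : ℕ}
    (hn : (∏ i, w i) ^ n = 1) : A ^ (r * n) = 1 := by
  rw [pow_mul, pow_self_of_shift hA, _root_.smul_pow, hn, one_smul, one_pow]

end Shift

theorem sum_range_mul_ite_of_antiperiodic {R : Type*} [Ring R] {n M : ℕ} [NeZero M]
    (hn : n = 2 * M) (v : ZMod n → R) (hv : ∀ l, v (l + M) = -v l) (a : ZMod n) :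
    ∑ i ∈ range M, v i * (if a - i = 0 then 1 else if a - i = M then -1 else 0) = v a := by
  subst hn
  have hcast : ∀ i j, i < 2 * M → j < 2 * M → ((i : ZMod (2 * M)) = j ↔ i = j) := by
    intro i j hi hj
    rw [ZMod.natCast_eq_natCast_iff', Nat.mod_eq_of_lt hi, Nat.mod_eq_of_lt hj]
  obtain ⟨k, hk, rfl⟩ : ∃ k < 2 * M, a = k :=
    ⟨a.val, ZMod.val_lt a, (ZMod.natCast_zmod_val a).symm⟩
  have hM := NeZero.pos M
  have hterm : ∀ i ∈ range M, ((k : ZMod (2 * M)) - i = 0 ↔ k = i) ∧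
      ((k : ZMod (2 * M)) - i = M ↔ k = i + M) := by
    intro i hi
    rw [mem_range] at hi
    rw [sub_eq_zero, sub_eq_iff_eq_add', ← Nat.cast_add, hcast _ _ hk (by omega),
      hcast _ _ hk (by omega), add_comm]
    exact ⟨Iff.rfl, Iff.rfl⟩
  trans ∑ i ∈ range M, v i * (if k = i then 1 else if k = i + M then -1 else 0)
  · exact sum_congr rfl fun i hi => by simp only [(hterm i hi).1, (hterm i hi).2]
  by_cases hkM : k < M
  · rw [sum_eq_single_of_mem k (mem_range.mpr hkM) fun i _ hik => by
      rw [if_neg (Ne.symm hik), if_neg (by omega), mul_zero]]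
    simp
  · rw [sum_eq_single_of_mem (k - M) (mem_range.mpr (by omega)) fun i hi hik => by
      rw [mem_range] at hi
      rw [if_neg (by omega), if_neg (by omega), mul_zero]]
    rw [if_neg (by omega), if_pos (by omega), mul_neg_one, ← hv, Nat.cast_sub (by omega),
      sub_add_cancel]

theorem Units.val_zpow_eq_pow_zmod_val {M : Type*} [Monoid M] (u : Mˣ) {n : ℕ} [NeZero n]
    (hu : (u : M) ^ n = 1) (z : ℤ) : ((u ^ z : Mˣ) : M) = (u : M) ^ (z : ZMod n).val := by
  rw [zpow_eq_zpow_emod' z (n := n) (Units.ext (by simpa)), ← ZMod.val_intCast, zpow_natCast,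
    Units.val_pow_eq_pow_val]

section Generator

open Fq

variable {N r : ℕ} [NeZero r] {u : Fin r → ℕ} {A : Matrix (Fin r) (Fin r) (Fq N)}

theorem constTerm_pow_apply_zero_zero (hN : 0 < N)
    (hA : ∀ i j, A i j = if j = i - 1 then xq N ^ u i else 0)
    (horder : orderOf (xq N ^ (∑ i, u i)) = 2 * N) {k : ℕ} (hk : k < 2 * N * r) :
    constTerm hN ((A ^ k) 0 0) = if k = 0 then 1 else if k = N * r then -1 else 0 := by
  rw [pow_apply_zero_zero_of_shift hA, prod_pow_eq_pow_sum]
  by_cases hrk : r ∣ k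
  · obtain ⟨q, rfl⟩ := hrk
    have hr := NeZero.pos r
    have hq : q < 2 * N := by nlinarith
    rw [if_pos (dvd_mul_right r q), Nat.mul_div_cancel_left q hr,
      constTerm_pow_of_orderOf hN horder hq]
    simp [hr.ne', mul_comm r q]
  · rw [if_neg hrk, map_zero, if_neg (by rintro rfl; exact hrk (dvd_zero r)),
      if_neg (by rintro rfl; exact hrk (dvd_mul_left r N))]

theorem constTerm_pow_val_apply_zero_zero (hN : 0 < N)
    (hA : ∀ i j, A i j = if j = i - 1 then xq N ^ u i else 0)
    (horder : orderOf (xq N ^ (∑ i, u i)) = 2 * N) (a : ZMod (2 * N * r)) :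
    constTerm hN ((A ^ a.val) 0 0) = if a = 0 then 1 else if a = (N * r : ℕ) then -1 else 0 := by
  have : NeZero N := .of_pos hN
  have hval : a.val = N * r ↔ a = (N * r : ℕ) := by
    constructor
    · intro h
      rw [← ZMod.natCast_zmod_val a, h]
    · rintro rfl
      exact ZMod.val_cast_of_lt (by nlinarith [NeZero.pos r])
  rw [constTerm_pow_apply_zero_zero hN hA horder (ZMod.val_lt a)]
  simp only [ZMod.val_eq_zero, hval]

end Generator

/-- Test-coefficient look-up property (Lemmas 6 and 7): for the canonical
generator `Φ(1)` with `x^{u_0+⋯+u_{r−1}}` of order `2N`, coefficients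
`v : ℤ_{2Nr} → ℚ` with `v_{Nr+l} = −v_l`, and test vector
`v₀ = Σ_{i∈[Nr]} v_i Φ(−i) e_0`, for every `m` the first coordinate of
`Φ(m)·v₀`, written as a polynomial of degree `< N` in `x`, has constant
term `v_m`. -/
theorem stmt_16 (N r : ℕ) (hN : 0 < N) [NeZero r] (u : Fin r → ℕ)
    (A : Matrix (Fin r) (Fin r) (Fq N))
    (hA : ∀ i j, A i j = if j = i - 1 then xq N ^ u i else 0)
    (horder : orderOf (xq N ^ (∑ i, u i)) = 2 * N)
    (hAu : IsUnit A)
    (v : ZMod (2 * N * r) → ℚ)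
    (hv : ∀ l : ZMod (2 * N * r), v (l + (N * r : ℕ)) = - v l)
    (vvec : Fin r → Fq N)
    (hvvec : vvec = ∑ i ∈ Finset.range (N * r),
        v (i : ZMod (2 * N * r)) •
          (((hAu.unit ^ (-(i : ℤ))) : (Matrix (Fin r) (Fin r) (Fq N))ˣ).val *ᵥ
            (Pi.single 0 1 : Fin r → Fq N))) :
    ∀ m : ℕ, ∀ p : Polynomial ℚ, p.degree < (N : ℕ) →
      Ideal.Quotient.mk (Ideal.span ({X ^ N + 1} : Set (Polynomial ℚ))) p =
        ((A ^ m) *ᵥ vvec) 0 →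
      p.coeff 0 = v (m : ZMod (2 * N * r)) := by
  intro m p hp hpA
  have : NeZero N := .of_pos hN
  have hperiod : A ^ (2 * N * r) = 1 := by
    rw [mul_comm _ r]
    exact pow_mul_eq_one_of_shift hA (by rw [prod_pow_eq_pow_sum, ← horder, pow_orderOf_eq_one])
  have hshift : ∀ i : ℕ,
      A ^ m * ((hAu.unit ^ (-(i : ℤ)) : (Matrix (Fin r) (Fin r) (Fq N))ˣ) : _) =
        A ^ ((m : ZMod (2 * N * r)) - i).val := by
    intro i
    have hUA : (hAu.unit : Matrix (Fin r) (Fin r) (Fq N)) = A := hAu.unit_spec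
    have hAm : A ^ m = ((hAu.unit ^ (m : ℤ) : (Matrix (Fin r) (Fin r) (Fq N))ˣ) : _) := by
      rw [zpow_natCast, Units.val_pow_eq_pow_val, hUA]
    rw [hAm, ← Units.val_mul, ← zpow_add,
      Units.val_zpow_eq_pow_zmod_val hAu.unit (hUA ▸ hperiod), hUA, ← sub_eq_add_neg]
    push_cast
    rfl
  rw [← Fq.constTerm_mk_of_degree_lt hN hp, hpA, hvvec, Matrix.mulVec_sum, Finset.sum_apply,
    map_sum]
  simp only [Matrix.mulVec_smul, Matrix.mulVec_mulVec, hshift]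
  simp only [Matrix.mulVec_single_one, Pi.smul_apply, Matrix.col_apply, map_smul, smul_eq_mul,
    constTerm_pow_val_apply_zero_zero hN hA horder]
  exact sum_range_mul_ite_of_antiperiodic (by ring) v hv _
end
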